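/- Spin-spin correlation identity: for the Ising model on a finite graph G=(V,E) with arbitrary field h ∈ ℝ^V, λ_{β,h,V}(σ_x σ_y) = φ_{p,h,G}(x ↔ y) + φ_{p,h,G}( 1_{{x ↮ y}} · tanh(h(K_t)) · tanh(h(K_u)) ), where K_t, K_u are the connected components of x and y, h(K) = β Σ_{i∈K} h_i and p_{ij} = 1 - exp(-2βJ_{ij}). -/

import Mathlib

open Finset

noncomputable section

variable {V : Type}

/-- The spin value (±1) attached to a Boolean spin (`true ↔ +1`, `false ↔ -1`). -/
def spin (b : Bool) : ℝ := if b then 1 else -1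

/-- The subgraph of `G` whose open edges are the edges in `F`. -/
def openSub (G : SimpleGraph V) (F : Finset (Sym2 V)) : SimpleGraph V where
  Adj i j := G.Adj i j ∧ s(i, j) ∈ F
  symm := by
    constructor
    intro i j h
    exact ⟨h.1.symm, by rw [Sym2.eq_swap]; exact h.2⟩
  loopless := ⟨fun i h => G.irrefl h.1⟩

instance [Fintype V] (H : SimpleGraph V) : Fintype H.ConnectedComponent := by
  classical exact Fintype.ofSurjective H.connectedComponentMk Quot.exists_rep

/-- The vertex set of a connected component, as a `Finset`. -/
def compSupp [Fintype V] (H : SimpleGraph V) (c : H.ConnectedComponent) : Finset V := by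
  classical exact Finset.univ.filter fun v => H.connectedComponentMk v = c

/-- Kronecker delta `δ_{σ_i,σ_j}` of a configuration on an (unordered) edge. -/
def eDelta {S : Type} [DecidableEq S] (σ : V → S) : Sym2 V → ℝ :=
  Sym2.lift ⟨fun i j => if σ i = σ j then 1 else 0, fun _ _ => by simp [eq_comm]⟩

/-- Product of spins `σ_i σ_j` on an (unordered) edge. -/
def eProd (σ : V → Bool) : Sym2 V → ℝ :=
  Sym2.lift ⟨fun i j => spin (σ i) * spin (σ j), fun _ _ => mul_comm _ _⟩

/-- The consistency indicator `Δ(σ,ω)`: equal to `1` iff `σ` is constant on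
every open edge of the configuration `F`. -/
def Delta (G : SimpleGraph V) (F : Finset (Sym2 V)) (σ : V → Bool) : ℝ := by
  classical exact if ∀ i j, G.Adj i j → s(i, j) ∈ F → σ i = σ j then 1 else 0

/-- The Bernoulli factor `B_J(ω) = ∏_{e open} p_e ∏_{e closed} (1-p_e)`. -/
def bern [Fintype V] [DecidableEq V] (G : SimpleGraph V) [DecidableRel G.Adj]
    (p : Sym2 V → ℝ) (F : Finset (Sym2 V)) : ℝ :=
  (∏ e ∈ F, p e) * ∏ e ∈ G.edgeFinset \ F, (1 - p e)

/-- The (unnormalized) Ising Boltzmann weight with free boundary condition. -/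
def isingW [Fintype V] [DecidableEq V] (G : SimpleGraph V) [DecidableRel G.Adj]
    (β : ℝ) (J : Sym2 V → ℝ) (h : V → ℝ) (σ : V → Bool) : ℝ :=
  Real.exp (β * ((∑ e ∈ G.edgeFinset, J e * eProd σ e) + ∑ i, h i * spin (σ i)))

/-- The random-cluster weight `B_J(ω) ∏_α 2cosh(β Σ_{i∈K_α} h_i)`. -/
def rcW [Fintype V] [DecidableEq V] (G : SimpleGraph V) [DecidableRel G.Adj]
    (β : ℝ) (p : Sym2 V → ℝ) (h : V → ℝ) (F : Finset (Sym2 V)) : ℝ :=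
  bern G p F * ∏ c : (openSub G F).ConnectedComponent,
    2 * Real.cosh (β * ∑ i ∈ compSupp (openSub G F) c, h i)

/-- Expectation of `f` under the random-cluster measure with external field. -/
def rcE [Fintype V] [DecidableEq V] (G : SimpleGraph V) [DecidableRel G.Adj]
    (β : ℝ) (p : Sym2 V → ℝ) (h : V → ℝ) (f : Finset (Sym2 V) → ℝ) : ℝ :=
  (∑ F ∈ G.edgeFinset.powerset, f F * rcW G β p h F) /
    ∑ F ∈ G.edgeFinset.powerset, rcW G β p h F

/-- `h(K_z) = β Σ_{i ∈ K_z} h_i` for the component `K_z` of `z` in `F`. -/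
def hK [Fintype V] [DecidableEq V] (G : SimpleGraph V) (β : ℝ) (h : V → ℝ)
    (F : Finset (Sym2 V)) (z : V) : ℝ :=
  β * ∑ i ∈ compSupp (openSub G F) ((openSub G F).connectedComponentMk z), h i

/-!
Edwards–Sokal expansion. Since `σ_i σ_j = 2 δ_{σ_i σ_j} - 1`, each edge weight is
`exp (β J_e σ_i σ_j) = exp (β J_e) (p_e δ_{σ_i σ_j} + 1 - p_e)`; expanding the product over edges
writes the Ising weight as a sum over sets `F` of open edges of `B(F) Δ(σ, F)`. For fixed `F`
the admissible `σ` are exactly the spin assignments to the clusters of `F`, which are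
independent `±1` spins in the fields `h(K)`: summing one out gives `2 cosh h(K)` (the
random-cluster weight), or `2 sinh h(K) = tanh h(K) · 2 cosh h(K)` when the observable carries its
spin. Thus `σ_x σ_y` averages to `1` when `x ↔ y` and to `tanh h(K_x) tanh h(K_y)` otherwise.
-/

lemma spin_mul_self (b : Bool) : spin b * spin b = 1 := by cases b <;> simp [spin]

lemma spin_mul_spin (a b : Bool) : spin a * spin b = if a = b then 1 else -1 := by
  cases a <;> cases b <;> simp [spin]

lemma sum_bool_exp_mul_spin (t : ℝ) :
    ∑ s : Bool, Real.exp (t * spin s) = 2 * Real.cosh t := by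
  simp only [Fintype.sum_bool, spin, if_true, Bool.false_eq_true, if_false, mul_one, mul_neg,
    Real.cosh_eq]
  ring

lemma sum_bool_spin_mul_exp_mul_spin (t : ℝ) :
    ∑ s : Bool, spin s * Real.exp (t * spin s) = Real.tanh t * (2 * Real.cosh t) := by
  calc ∑ s : Bool, spin s * Real.exp (t * spin s) = 2 * Real.sinh t := by
        simp only [Fintype.sum_bool, spin, if_true, Bool.false_eq_true, if_false, mul_one,
          mul_neg, one_mul, neg_one_mul, Real.sinh_eq]
        ring
    _ = Real.tanh t * (2 * Real.cosh t) := by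
        rw [Real.tanh_eq_sinh_div_cosh]
        field_simp [(Real.cosh_pos t).ne']

section IndependentSpins

variable {κ : Type} [Fintype κ] [DecidableEq κ]

lemma sum_prod_exp_mul_spin (t : κ → ℝ) :
    ∑ ε : κ → Bool, ∏ c, Real.exp (t c * spin (ε c)) = ∏ c, 2 * Real.cosh (t c) := by
  simp_rw [← sum_bool_exp_mul_spin, Fintype.prod_sum]

lemma sum_spin_mul_spin_mul_prod_exp_mul_spin (t : κ → ℝ) {a b : κ} (hab : a ≠ b) :
    ∑ ε : κ → Bool, spin (ε a) * spin (ε b) * ∏ c, Real.exp (t c * spin (ε c))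
      = Real.tanh (t a) * Real.tanh (t b) * ∏ c, 2 * Real.cosh (t c) := by
  have hpair : ∀ u : κ → ℝ, ∏ c, (if c ∈ ({a, b} : Finset κ) then u c else 1) = u a * u b :=
    fun u => by rw [prod_ite_mem, univ_inter, prod_pair hab]
  have hsingle : ∀ c, ∑ s : Bool, (if c ∈ ({a, b} : Finset κ) then spin s else 1) *
      Real.exp (t c * spin s)
        = (if c ∈ ({a, b} : Finset κ) then Real.tanh (t c) else 1) * (2 * Real.cosh (t c)) := by
    intro c
    split_ifs
    · exact sum_bool_spin_mul_exp_mul_spin (t c)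
    · simp only [one_mul, sum_bool_exp_mul_spin]
  calc ∑ ε : κ → Bool, spin (ε a) * spin (ε b) * ∏ c, Real.exp (t c * spin (ε c))
      = ∑ ε : κ → Bool, ∏ c, (if c ∈ ({a, b} : Finset κ) then spin (ε c) else 1) *
          Real.exp (t c * spin (ε c)) := by
        refine sum_congr rfl fun ε _ => ?_
        rw [prod_mul_distrib, hpair fun c => spin (ε c)]
    _ = ∏ c, (if c ∈ ({a, b} : Finset κ) then Real.tanh (t c) else 1) * (2 * Real.cosh (t c)) := by
        rw [← prod_congr rfl fun c _ => hsingle c, Fintype.prod_sum]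
    _ = _ := by rw [prod_mul_distrib, hpair]

end IndependentSpins

theorem SimpleGraph.exists_comp_connectedComponentMk_eq_iff {H : SimpleGraph V} {α : Type*}
    (f : V → α) :
    (∃ g : H.ConnectedComponent → α, g ∘ H.connectedComponentMk = f) ↔
      ∀ v w, H.Adj v w → f v = f w := by
  constructor
  · rintro ⟨g, rfl⟩ v w hvw
    exact congrArg g (SimpleGraph.ConnectedComponent.connectedComponentMk_eq_of_adj hvw)
  · intro hf
    refine ⟨Quot.lift f fun v w (hvw : H.Reachable v w) => ?_, rfl⟩
    obtain ⟨p⟩ := hvw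
    induction p with
    | nil => rfl
    | cons hadj _ ih => exact (hf _ _ hadj).trans ih

theorem SimpleGraph.sum_mul_comp_connectedComponentMk [Fintype V] (H : SimpleGraph V)
    (f : V → ℝ) (u : H.ConnectedComponent → ℝ) :
    ∑ i, f i * u (H.connectedComponentMk i) = ∑ c, (∑ i ∈ compSupp H c, f i) * u c := by
  classical
  rw [← sum_fiberwise univ H.connectedComponentMk]
  refine sum_congr rfl fun c _ => ?_
  rw [sum_mul]
  refine sum_congr (by ext; simp [compSupp]) fun i hi => ?_
  rw [(mem_filter.mp hi).2]

open scoped Classical in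
lemma Delta_eq_ite (G : SimpleGraph V) (F : Finset (Sym2 V)) (σ : V → Bool) :
    Delta G F σ = if ∀ v w, (openSub G F).Adj v w → σ v = σ w then 1 else 0 := by
  simp only [Delta, openSub, and_imp]

open scoped Classical in
lemma sum_Delta_mul [Fintype V] [DecidableEq V] (G : SimpleGraph V) (F : Finset (Sym2 V))
    (g : (V → Bool) → ℝ) :
    ∑ σ, Delta G F σ * g σ =
      ∑ ε : (openSub G F).ConnectedComponent → Bool, g (ε ∘ (openSub G F).connectedComponentMk) := by
  have hinj : Function.Injective
      (· ∘ (openSub G F).connectedComponentMk : ((openSub G F).ConnectedComponent → Bool) → _) :=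
    Quot.mk_surjective.injective_comp_right
  rw [← sum_image hinj.injOn]
  simp_rw [Delta_eq_ite, ite_mul, one_mul, zero_mul, ← sum_filter,
    ← SimpleGraph.exists_comp_connectedComponentMk_eq_iff]
  congr 1
  ext σ
  simp

lemma exp_mul_sum_mul_spin_comp_connectedComponentMk [Fintype V] (H : SimpleGraph V)
    (β : ℝ) (h : V → ℝ) (ε : H.ConnectedComponent → Bool) :
    Real.exp (β * ∑ i, h i * spin (ε (H.connectedComponentMk i)))
      = ∏ c, Real.exp (β * (∑ i ∈ compSupp H c, h i) * spin (ε c)) := by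
  rw [H.sum_mul_comp_connectedComponentMk h fun c => spin (ε c), mul_sum, Real.exp_sum]
  simp_rw [mul_assoc]

open scoped Classical in
lemma sum_Delta_mul_exp_field [Fintype V] [DecidableEq V] (G : SimpleGraph V)
    (F : Finset (Sym2 V)) (β : ℝ) (h : V → ℝ) :
    ∑ σ, Delta G F σ * Real.exp (β * ∑ i, h i * spin (σ i))
      = ∏ c, 2 * Real.cosh (β * ∑ i ∈ compSupp (openSub G F) c, h i) := by
  rw [sum_Delta_mul]
  simp_rw [Function.comp_apply, exp_mul_sum_mul_spin_comp_connectedComponentMk]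
  exact sum_prod_exp_mul_spin _

open scoped Classical in
lemma sum_Delta_mul_spin_mul_spin_mul_exp_field [Fintype V] [DecidableEq V]
    (G : SimpleGraph V) (F : Finset (Sym2 V)) (β : ℝ) (h : V → ℝ) (x y : V) :
    ∑ σ, Delta G F σ * (spin (σ x) * spin (σ y) * Real.exp (β * ∑ i, h i * spin (σ i)))
      = ((if (openSub G F).Reachable x y then 1 else 0)
          + (if ¬ (openSub G F).Reachable x y then 1 else 0) *
              Real.tanh (hK G β h F x) * Real.tanh (hK G β h F y))
        * ∏ c, 2 * Real.cosh (β * ∑ i ∈ compSupp (openSub G F) c, h i) := by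
  rw [sum_Delta_mul]
  simp_rw [Function.comp_apply, exp_mul_sum_mul_spin_comp_connectedComponentMk]
  by_cases hxy : (openSub G F).Reachable x y
  · simp_rw [SimpleGraph.ConnectedComponent.sound hxy, spin_mul_self, one_mul]
    simp [hxy, sum_prod_exp_mul_spin]
  · rw [sum_spin_mul_spin_mul_prod_exp_mul_spin _ (mt SimpleGraph.ConnectedComponent.exact hxy)]
    simp [hxy, hK]

lemma exp_mul_eProd (β : ℝ) (J p : Sym2 V → ℝ) (hp : ∀ e, p e = 1 - Real.exp (-(2 * β) * J e))
    (σ : V → Bool) (e : Sym2 V) :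
    Real.exp (β * (J e * eProd σ e))
      = Real.exp (β * J e) * (p e * eDelta σ e + (1 - p e)) := by
  induction e using Sym2.ind with
  | _ i j =>
    simp only [eProd, eDelta, Sym2.lift_mk, spin_mul_spin, hp, sub_sub_cancel]
    split_ifs
    · rw [mul_one, mul_one, sub_add_cancel, mul_one]
    · rw [mul_zero, zero_add, ← Real.exp_add]
      ring_nf

lemma prod_eDelta_eq_Delta [Fintype V] (G : SimpleGraph V) [DecidableRel G.Adj]
    {F : Finset (Sym2 V)} (hF : F ⊆ G.edgeFinset) (σ : V → Bool) :
    ∏ e ∈ F, eDelta σ e = Delta G F σ := by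
  rw [Delta_eq_ite]
  split_ifs with hσ
  · refine prod_eq_one fun e he => ?_
    induction e using Sym2.ind with
    | _ i j =>
      have hij : G.Adj i j := SimpleGraph.mem_edgeFinset.mp (hF he)
      simp [eDelta, hσ i j ⟨hij, he⟩]
  · push Not at hσ
    obtain ⟨i, j, hij, hne⟩ := hσ
    exact prod_eq_zero hij.2 (by simp [eDelta, hne])

lemma exp_interaction_eq_sum_bern_mul_Delta [Fintype V] [DecidableEq V]
    (G : SimpleGraph V) [DecidableRel G.Adj] (β : ℝ) (J p : Sym2 V → ℝ)
    (hp : ∀ e, p e = 1 - Real.exp (-(2 * β) * J e)) (σ : V → Bool) :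
    Real.exp (β * ∑ e ∈ G.edgeFinset, J e * eProd σ e)
      = (∏ e ∈ G.edgeFinset, Real.exp (β * J e)) *
        ∑ F ∈ G.edgeFinset.powerset, bern G p F * Delta G F σ := by
  rw [mul_sum, Real.exp_sum, prod_congr rfl fun e _ => exp_mul_eProd β J p hp σ e,
    prod_mul_distrib, prod_add]
  congr 1
  refine sum_congr rfl fun F hF => ?_
  rw [prod_mul_distrib, prod_eDelta_eq_Delta G (mem_powerset.mp hF), bern]
  ring

lemma sum_mul_isingW [Fintype V] [DecidableEq V] (G : SimpleGraph V) [DecidableRel G.Adj]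
    (β : ℝ) (J p : Sym2 V → ℝ) (hp : ∀ e, p e = 1 - Real.exp (-(2 * β) * J e)) (h : V → ℝ)
    (f : (V → Bool) → ℝ) :
    ∑ σ, f σ * isingW G β J h σ
      = (∏ e ∈ G.edgeFinset, Real.exp (β * J e)) *
        ∑ F ∈ G.edgeFinset.powerset, bern G p F *
          ∑ σ, Delta G F σ * (f σ * Real.exp (β * ∑ i, h i * spin (σ i))) := by
  simp_rw [isingW, mul_add, Real.exp_add, exp_interaction_eq_sum_bern_mul_Delta G β J p hp,
    mul_sum, sum_mul, mul_sum]
  rw [sum_comm]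
  refine sum_congr rfl fun F _ => sum_congr rfl fun σ _ => ?_
  ring

/-- `g F` is the conditional expectation of `f` given the open edges `F` in the Edwards–Sokal
coupling. -/
lemma isingExpectation_eq_rcE [Fintype V] [DecidableEq V] (G : SimpleGraph V)
    [DecidableRel G.Adj] (β : ℝ) (J p : Sym2 V → ℝ)
    (hp : ∀ e, p e = 1 - Real.exp (-(2 * β) * J e)) (h : V → ℝ)
    (f : (V → Bool) → ℝ) (g : Finset (Sym2 V) → ℝ)
    (hfg : ∀ F, ∑ σ, Delta G F σ * (f σ * Real.exp (β * ∑ i, h i * spin (σ i)))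
      = g F * ∏ c, 2 * Real.cosh (β * ∑ i ∈ compSupp (openSub G F) c, h i)) :
    (∑ σ, f σ * isingW G β J h σ) / ∑ σ, isingW G β J h σ = rcE G β p h g := by
  have hC : ∏ e ∈ G.edgeFinset, Real.exp (β * J e) ≠ 0 :=
    prod_ne_zero_iff.mpr fun e _ => (Real.exp_pos _).ne'
  rw [← sum_congr rfl fun σ _ => one_mul (isingW G β J h σ), sum_mul_isingW G β J p hp,
    sum_mul_isingW G β J p hp, mul_div_mul_left _ _ hC, rcE]
  simp_rw [hfg, one_mul, sum_Delta_mul_exp_field, rcW]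
  congr 1
  refine sum_congr rfl fun F _ => ?_
  ring

lemma rcE_add [Fintype V] [DecidableEq V] (G : SimpleGraph V) [DecidableRel G.Adj]
    (β : ℝ) (p : Sym2 V → ℝ) (h : V → ℝ) (f g : Finset (Sym2 V) → ℝ) :
    rcE G β p h (fun F => f F + g F) = rcE G β p h f + rcE G β p h g := by
  simp only [rcE, add_mul, sum_add_distrib, add_div]

open scoped Classical in
theorem statement9_general [Fintype V] [DecidableEq V]
    (G : SimpleGraph V) [DecidableRel G.Adj]
    (β : ℝ)
    (J : Sym2 V → ℝ)
    (h : V → ℝ)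
    (p : Sym2 V → ℝ) (hp : ∀ e, p e = 1 - Real.exp (-(2 * β) * J e))
    (x y : V) :
    (∑ σ : V → Bool, spin (σ x) * spin (σ y) * isingW G β J h σ) /
        (∑ σ : V → Bool, isingW G β J h σ)
      = rcE G β p h (fun F => if (openSub G F).Reachable x y then 1 else 0)
        + rcE G β p h (fun F => (if ¬ (openSub G F).Reachable x y then 1 else 0) *
            Real.tanh (hK G β h F x) * Real.tanh (hK G β h F y)) := by
  rw [← rcE_add]
  exact isingExpectation_eq_rcE G β J p hp h _ _
    fun F => sum_Delta_mul_spin_mul_spin_mul_exp_field G F β h x y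

open scoped Classical in
/-- Corollary (spin-spin correlation): the Ising two-point correlation in an
arbitrary magnetic field in terms of the random-cluster measure. -/
theorem statement9 [Fintype V] [DecidableEq V]
    (G : SimpleGraph V) [DecidableRel G.Adj]
    (β : ℝ) (hβ : 0 < β)
    (J : Sym2 V → ℝ) (hJ : ∀ e ∈ G.edgeFinset, 0 ≤ J e)
    (h : V → ℝ)
    (p : Sym2 V → ℝ) (hp : ∀ e, p e = 1 - Real.exp (-(2 * β) * J e))
    (x y : V) (hxy : x ≠ y) :
    (∑ σ : V → Bool, spin (σ x) * spin (σ y) * isingW G β J h σ) /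
        (∑ σ : V → Bool, isingW G β J h σ)
      = rcE G β p h (fun F => if (openSub G F).Reachable x y then 1 else 0)
        + rcE G β p h (fun F => (if ¬ (openSub G F).Reachable x y then 1 else 0) *
            Real.tanh (hK G β h F x) * Real.tanh (hK G β h F y)) :=
  statement9_general G β J h p hp x y

end
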